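/- If u is a vertex of degree 1 in a finite graph G with unique neighbour v, then Z(G) = −Z(G \ N[v]), where Z(G) = 1 − χ(Ind(G)). -/

import Mathlib

open scoped Classical

noncomputable section

/-- The (unreduced) Euler characteristic of the independence complex `Ind(G)`. -/
def eulerCharInd {V : Type*} [Fintype V] (G : SimpleGraph V) : ℤ :=
  ∑ s ∈ Finset.univ.filter
      (fun s : Finset V => s.Nonempty ∧ ∀ u ∈ s, ∀ w ∈ s, ¬ G.Adj u w),
    (-1 : ℤ) ^ (s.card - 1)

/-- The Witten index `Z(G) = 1 - χ(Ind(G))`. -/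
def wittenInd {V : Type*} [Fintype V] (G : SimpleGraph V) : ℤ := 1 - eulerCharInd G

/-!
Write `Z(G)` as the alternating count `∑ (-1)^|s|` over all independent sets `s` of `G`, the
empty one included, and split it according to whether `v ∈ s`. A set avoiding `v` avoids all of
`N(u) = {v}`, so toggling `u` is a sign-reversing involution on these sets and they contribute `0`.
A set containing `v` is `insert v t` for a unique independent set `t` of `G \ N[v]`, so these
sets contribute `-Z(G \ N[v])`.
-/

open Finset

lemma neg_one_pow_sub_one {n : ℕ} (hn : n ≠ 0) : (-1 : ℤ) ^ (n - 1) = -(-1) ^ n := by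
  rw [← pow_sub_one_mul hn]
  ring

lemma Finset.neg_one_pow_card_erase {α : Type*} [DecidableEq α] {s : Finset α} {a : α}
    (ha : a ∈ s) : (-1 : ℤ) ^ #(s.erase a) = -(-1) ^ #s := by
  rw [card_erase_of_mem ha, neg_one_pow_sub_one (card_ne_zero_of_mem ha)]

lemma Finset.sum_neg_one_pow_card_eq_zero_of_insert {α : Type*} [DecidableEq α]
    {𝒜 : Finset (Finset α)} (a : α) (h𝒜 : ∀ s, a ∉ s → (insert a s ∈ 𝒜 ↔ s ∈ 𝒜)) :
    ∑ s ∈ 𝒜, (-1 : ℤ) ^ #s = 0 := by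
  let toggle (s : Finset α) : Finset α := if a ∈ s then s.erase a else insert a s
  refine sum_involution (fun s _ => toggle s) (fun s _ => ?_) (fun s _ _ => ?_)
    (fun s hs => ?_) (fun s _ => ?_)
  all_goals by_cases ha : a ∈ s <;> simp only [toggle, ha, if_true, if_false]
  · rw [neg_one_pow_card_erase ha]; ring
  · rw [card_insert_of_notMem ha, pow_succ]; ring
  · exact fun h => notMem_erase a s (by rwa [h])
  · exact fun h => ha (h ▸ mem_insert_self a s)
  · exact (h𝒜 (s.erase a) (notMem_erase a s)).1 (by rwa [insert_erase ha])
  · exact (h𝒜 s ha).2 hs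
  · simp [insert_erase ha]
  · simp [erase_insert ha]

namespace SimpleGraph

variable {V : Type*} {G : SimpleGraph V}

lemma isIndepSet_coe_iff {s : Finset V} :
    G.IsIndepSet (s : Set V) ↔ ∀ a ∈ s, ∀ b ∈ s, ¬ G.Adj a b :=
  ⟨fun hs _ ha _ hb hab => hs ha hb hab.ne hab, fun hs _ ha _ hb _ => hs _ ha _ hb⟩

lemma isIndepSet_insert_iff_of_subset_compl {s : Set V} {u : V}
    (hs : s ⊆ (G.neighborSet u)ᶜ) : G.IsIndepSet (insert u s) ↔ G.IsIndepSet s := by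
  rw [IsIndepSet, Set.pairwise_insert]
  exact and_iff_left fun b hb _ => ⟨fun hub => hs hb hub, fun hbu => hs hb hbu.symm⟩

lemma isIndepSet_induce_iff {U : Set V} {t : Set U} :
    (G.induce U).IsIndepSet t ↔ G.IsIndepSet (Subtype.val '' t) :=
  (Subtype.val_injective.injOn.pairwise_image (r := fun a b => ¬G.Adj a b)).symm

variable [Fintype V] (G)

def indepFinsets : Finset (Finset V) := univ.filter fun s => G.IsIndepSet (s : Set V)

@[simp]
lemma mem_indepFinsets {s : Finset V} : s ∈ G.indepFinsets ↔ G.IsIndepSet (s : Set V) := by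
  simp [indepFinsets]

lemma sum_indepFinsets_subset_compl_neighborSet (u : V) :
    ∑ s ∈ G.indepFinsets with ↑s ⊆ (G.neighborSet u)ᶜ, (-1 : ℤ) ^ #s = 0 := by
  refine sum_neg_one_pow_card_eq_zero_of_insert u fun s _ => ?_
  simp only [mem_filter, mem_indepFinsets, coe_insert, Set.insert_subset_iff, Set.mem_compl_iff,
    G.notMem_neighborSet_self, not_false_eq_true, true_and]
  exact and_congr_left isIndepSet_insert_iff_of_subset_compl

lemma sum_indepFinsets_mem (v : V) :
    ∑ s ∈ G.indepFinsets with v ∈ s, (-1 : ℤ) ^ #s =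
      -∑ s ∈ G.indepFinsets with ↑s ⊆ (G.neighborSet v ∪ {v})ᶜ, (-1 : ℤ) ^ #s := by
  rw [← sum_neg_distrib]
  refine sum_nbij' (·.erase v) (insert v) (fun s hs => ?_) (fun t ht => ?_)
    (fun s hs => insert_erase (mem_filter.1 hs).2) (fun t ht => ?_)
    (fun s hs => by rw [neg_one_pow_card_erase (mem_filter.1 hs).2, neg_neg])
  · simp only [mem_filter, mem_indepFinsets] at hs ⊢
    obtain ⟨hind, hv⟩ := hs
    refine ⟨hind.mono (coe_subset.2 (erase_subset v s)), fun x hx => ?_⟩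
    obtain ⟨hxv, hxs⟩ := mem_erase.1 hx
    simpa [hxv] using hind hv hxs hxv.symm
  · simp only [mem_filter, mem_indepFinsets] at ht ⊢
    rw [coe_insert, isIndepSet_insert_iff_of_subset_compl]
    · exact ⟨ht.1, mem_insert_self v t⟩
    · exact ht.2.trans (Set.compl_subset_compl.2 Set.subset_union_left)
  · exact erase_insert fun hv => (mem_filter.1 ht).2 hv (Or.inr rfl)

lemma sum_indepFinsets_induce {M : Type*} [AddCommMonoid M] (U : Set V) [Fintype U] (f : ℕ → M) :
    ∑ t ∈ (G.induce U).indepFinsets, f #t =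
      ∑ s ∈ G.indepFinsets with ↑s ⊆ U, f #s := by
  refine sum_nbij' (·.map (Function.Embedding.subtype _)) (·.subtype (· ∈ U)) (fun t ht => ?_)
    (fun s hs => ?_) (fun t _ => by ext; simp) (fun s hs => subtype_map_of_mem (mem_filter.1 hs).2)
    (fun t _ => by rw [card_map])
  · simp only [mem_filter, mem_indepFinsets] at ht ⊢
    exact ⟨by simpa [coe_map] using isIndepSet_induce_iff.1 ht, map_subtype_subset t⟩
  · simp only [mem_filter, mem_indepFinsets] at hs ⊢
    refine isIndepSet_induce_iff.2 (hs.1.mono ?_)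
    rintro _ ⟨x, hx, rfl⟩
    exact mem_subtype.1 hx

end SimpleGraph

lemma wittenInd_eq_sum_indepFinsets {V : Type*} [Fintype V] (G : SimpleGraph V) :
    wittenInd G = ∑ s ∈ G.indepFinsets, (-1 : ℤ) ^ #s := by
  rw [wittenInd, eulerCharInd, ← add_sum_erase _ _ (by simp : ∅ ∈ G.indepFinsets), card_empty,
    pow_zero, sub_eq_add_neg, ← sum_neg_distrib]
  congr 1
  refine sum_congr ?_ fun s hs => ?_
  · ext s
    simp [G.isIndepSet_coe_iff, nonempty_iff_ne_empty]
  · rw [neg_one_pow_sub_one (mt card_eq_zero.1 (mem_erase.1 hs).1), neg_neg]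

theorem stmt_5 {V : Type*} [Fintype V] (G : SimpleGraph V) (u v : V)
    (h : G.neighborSet u = {v}) :
    wittenInd G = - wittenInd (G.induce ((G.neighborSet v ∪ {v})ᶜ)) := by
  have hsplit := sum_filter_add_sum_filter_not G.indepFinsets (v ∈ ·) fun s => (-1 : ℤ) ^ #s
  have hcancel : ∑ s ∈ G.indepFinsets with v ∉ s, (-1 : ℤ) ^ #s = 0 := by
    simpa [h, Set.subset_compl_singleton_iff] using G.sum_indepFinsets_subset_compl_neighborSet u
  rw [G.sum_indepFinsets_mem, hcancel, add_zero] at hsplit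
  rw [wittenInd_eq_sum_indepFinsets, wittenInd_eq_sum_indepFinsets, G.sum_indepFinsets_induce,
    ← hsplit]

end
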